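/- In a flag simple 3-polytope, for every facet F_i there exists a facet F_j disjoint from F_i. -/

import Mathlib

/-- A combinatorial model of a simple 3-polytope: `m` facets, each given by
its (finite) set of vertices; every vertex lies in exactly three facets, two
distinct facets meet in an edge (two vertices) or not at all. -/
structure SimplePolytope3 (m : ℕ) (V : Type) [Fintype V] [DecidableEq V] where
  facet : Fin m → Finset V
  facet_card : ∀ i, 3 ≤ (facet i).card
  vertex_in_three : ∀ v : V, (Finset.univ.filter (fun i => v ∈ facet i)).card = 3
  inter_edge : ∀ i j, i ≠ j → facet i ∩ facet j = ∅ ∨ (facet i ∩ facet j).card = 2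
  four_le_m : 4 ≤ m

namespace SimplePolytope3

variable {m : ℕ} {V : Type} [Fintype V] [DecidableEq V] (P : SimplePolytope3 m V)

/-- Two facets are adjacent if they are distinct and intersect. -/
def Adjacent (i j : Fin m) : Prop := i ≠ j ∧ (P.facet i ∩ P.facet j).Nonempty

/-- A `k`-belt: a cyclic sequence of `k ≥ 3` pairwise distinct facets such that
consecutive facets (cyclically) are adjacent, non-consecutive ones are disjoint,
and no three of them share a common vertex. -/
def IsBelt (k : ℕ) (b : ZMod k → Fin m) : Prop :=
  3 ≤ k ∧ Function.Injective b ∧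
  (∀ s t : ZMod k, s ≠ t →
    ((P.facet (b s) ∩ P.facet (b t)).Nonempty ↔ (t = s + 1 ∨ s = t + 1))) ∧
  (∀ s t u : ZMod k, s ≠ t → t ≠ u → s ≠ u →
    P.facet (b s) ∩ P.facet (b t) ∩ P.facet (b u) = ∅)

/-- A simple polytope is flag if every nonempty collection of pairwise
intersecting facets has a common vertex. -/
def Flag : Prop :=
  ∀ S : Finset (Fin m), S.Nonempty →
    (∀ i ∈ S, ∀ j ∈ S, (P.facet i ∩ P.facet j).Nonempty) →
    ∃ v, ∀ i ∈ S, v ∈ P.facet i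

/-- A Pogorelov polytope: a simple 3-polytope different from the simplex
(equivalently, with at least 5 facets) having no 3-belts and no 4-belts. -/
def Pogorelov : Prop :=
  5 ≤ m ∧ (¬ ∃ b : ZMod 3 → Fin m, P.IsBelt 3 b) ∧ (¬ ∃ b : ZMod 4 → Fin m, P.IsBelt 4 b)

end SimplePolytope3

/-!
If `F_i` met every other facet, take a vertex `w` outside `F_i` (one exists, since another
facet cannot be contained in `F_i`). Then `F_i` and the three facets at `w` are four pairwise
intersecting facets, so by flagness they share a vertex; but every vertex of a simple
polytope lies in exactly three facets.
-/

namespace SimplePolytope3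

variable {m : ℕ} {V : Type} [Fintype V] [DecidableEq V] (P : SimplePolytope3 m V)

def facetsAt (v : V) : Finset (Fin m) := Finset.univ.filter (fun i => v ∈ P.facet i)

@[simp]
lemma mem_facetsAt {v : V} {i : Fin m} : i ∈ P.facetsAt v ↔ v ∈ P.facet i := by
  simp [facetsAt]

lemma card_facetsAt (v : V) : (P.facetsAt v).card = 3 := P.vertex_in_three v

lemma card_le_three_of_forall_mem {S : Finset (Fin m)} {v : V}
    (h : ∀ i ∈ S, v ∈ P.facet i) : S.card ≤ 3 :=
  P.card_facetsAt v ▸ Finset.card_le_card fun i hi => P.mem_facetsAt.mpr (h i hi)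

lemma facet_nonempty (i : Fin m) : (P.facet i).Nonempty :=
  Finset.card_pos.mp (by have := P.facet_card i; omega)

lemma not_facet_subset {i j : Fin m} (hij : i ≠ j) : ¬ P.facet j ⊆ P.facet i := by
  intro hsub
  have hinter : P.facet i ∩ P.facet j = P.facet j := Finset.inter_eq_right.mpr hsub
  have hcard := P.facet_card j
  rcases P.inter_edge i j hij with h | h <;> rw [hinter] at h
  · exact (P.facet_nonempty j).ne_empty h
  · omega

lemma exists_not_mem_facet (i : Fin m) : ∃ w, w ∉ P.facet i := by
  obtain ⟨j, hji⟩ := Fintype.exists_ne_of_one_lt_card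
    (by rw [Fintype.card_fin]; have := P.four_le_m; omega) i
  by_contra! h
  exact P.not_facet_subset hji.symm fun v _ => h v

lemma inter_nonempty_of_forall_ne {i : Fin m}
    (hmeet : ∀ j, i ≠ j → (P.facet i ∩ P.facet j).Nonempty) (j : Fin m) :
    (P.facet i ∩ P.facet j).Nonempty := by
  rcases eq_or_ne i j with rfl | hij
  · simpa using P.facet_nonempty i
  · exact hmeet j hij

lemma insert_facetsAt_pairwise_inter_nonempty {i : Fin m}
    (hmeet : ∀ j, i ≠ j → (P.facet i ∩ P.facet j).Nonempty) (w : V) :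
    ∀ a ∈ insert i (P.facetsAt w), ∀ b ∈ insert i (P.facetsAt w),
      (P.facet a ∩ P.facet b).Nonempty := by
  have hi := P.inter_nonempty_of_forall_ne hmeet
  simp only [Finset.mem_insert, mem_facetsAt]
  rintro a (rfl | ha) b (rfl | hb)
  · exact hi _
  · exact hi _
  · exact Finset.inter_comm (P.facet _) _ ▸ hi _
  · exact ⟨w, Finset.mem_inter.mpr ⟨ha, hb⟩⟩

end SimplePolytope3

open SimplePolytope3 in
/-- In a flag simple 3-polytope, for every facet there exists a facet disjoint
from it. -/
theorem flag_exists_disjoint_facet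
    {m : ℕ} {V : Type} [Fintype V] [DecidableEq V]
    (P : SimplePolytope3 m V) (hflag : P.Flag) :
    ∀ i : Fin m, ∃ j : Fin m, i ≠ j ∧ P.facet i ∩ P.facet j = ∅ := by
  intro i
  by_contra! hmeet
  obtain ⟨w, hw⟩ := P.exists_not_mem_facet i
  have hi : i ∉ P.facetsAt w := by simpa using hw
  obtain ⟨v, hv⟩ := hflag _ (Finset.insert_nonempty _ _)
    (P.insert_facetsAt_pairwise_inter_nonempty hmeet w)
  have hle := P.card_le_three_of_forall_mem hv
  rw [Finset.card_insert_of_notMem hi, P.card_facetsAt w] at hle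
  omega
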